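/- Let nonnegative power levels P^c_i, P^d_i, P^u_i (i = 1,…,n) be given, and assume Σ_{i=1}^n p_i = 1. Then the stationary expected power equals the throughput times the average energy per round: Σ_{i=1}^n ( P^c_i · Pr_{π_m}(x^c_i > 0) + P^d_i · E_{π_m}[x^d_i] + P^u_i · E_{π_m}[x^u_i] ) = (Z(m−1)/Z(m)) · Σ_{i=1}^n p_i · ℰ_i, where ℰ_i = P^c_i/μ^c_i + P^u_i/μ^u_i + P^d_i/μ^d_i and Pr_{π_m}(x^c_i > 0) = Σ_{x ∈ X(m), x^c_i ≥ 1} π_m(x). -/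
import Mathlib


open scoped BigOperators

/-- A state of the closed queueing network: numbers of tasks at each client's
downlink (`d`), computation (`c`), and uplink (`u`) servers. -/
structure St (n : ℕ) where
  d : Fin n → ℕ
  c : Fin n → ℕ
  u : Fin n → ℕ

namespace St

variable {n : ℕ}

/-- Total number of tasks in a state. -/
def total (x : St n) : ℕ := ∑ i, (x.d i + x.c i + x.u i)

/-- Product-form weight of a state. -/
noncomputable def w (p μc μd μu : Fin n → ℝ) (x : St n) : ℝ :=
  ∏ i,
    (p i / μc i) ^ x.c i *
      ((p i / μd i) ^ x.d i / (Nat.factorial (x.d i) : ℝ)) *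
      ((p i / μu i) ^ x.u i / (Nat.factorial (x.u i) : ℝ))

/-- Normalizing constant `Z(k)` (it vanishes for `k < 0`). -/
noncomputable def Z (p μc μd μu : Fin n → ℝ) (k : ℤ) : ℝ :=
  ∑' x : St n, if (total x : ℤ) = k then w p μc μd μu x else 0

/-- Product-form distribution `π_k`. -/
noncomputable def pd (p μc μd μu : Fin n → ℝ) (k : ℤ) (x : St n) : ℝ :=
  w p μc μd μu x / Z p μc μd μu k

/-- Expectation of `f` under the product-form distribution `π_k`. -/
noncomputable def Epi (p μc μd μu : Fin n → ℝ) (k : ℤ) (f : St n → ℝ) : ℝ :=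
  ∑' x : St n, if (total x : ℤ) = k then f x * pd p μc μd μu k x else 0

end St

open St


section Aux
variable {n : ℕ}

lemma StAux.dcu_inj : Function.Injective (fun x : St n => (x.d, x.c, x.u)) := by
  rintro ⟨d1,c1,u1⟩ ⟨d2,c2,u2⟩ h
  simp_all

lemma StAux.finite_total (n k : ℕ) : {x : St n | x.total = k}.Finite := by
  have hfin : ((Set.Iic fun _ : Fin n => k) ×ˢ (Set.Iic fun _ : Fin n => k) ×ˢ
      (Set.Iic fun _ : Fin n => k)).Finite :=
    (Set.finite_Iic _).prod ((Set.finite_Iic _).prod (Set.finite_Iic _))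
  refine (hfin.preimage StAux.dcu_inj.injOn).subset ?_
  intro x hx
  simp only [Set.mem_setOf_eq] at hx
  have hb : ∀ i, x.d i + x.c i + x.u i ≤ k := by
    intro i
    calc x.d i + x.c i + x.u i ≤ ∑ j, (x.d j + x.c j + x.u j) :=
          Finset.single_le_sum (f := fun j => x.d j + x.c j + x.u j) (fun j _ => Nat.zero_le _) (Finset.mem_univ i)
      _ = k := hx
  simp only [Set.mem_preimage, Set.mem_prod, Set.mem_Iic, Pi.le_def]
  exact ⟨fun i => by have := hb i; omega, fun i => by have := hb i; omega,
    fun i => by have := hb i; omega⟩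

noncomputable def StAux.fs (n k : ℕ) : Finset (St n) := (StAux.finite_total n k).toFinset

lemma StAux.mem_fs {k : ℕ} {x : St n} : x ∈ StAux.fs n k ↔ x.total = k :=
  Set.Finite.mem_toFinset _
end Aux


section Aux
variable {n : ℕ}

lemma StAux.prod_update_univ (F : Fin n → ℕ → ℝ) (g : Fin n → ℕ) (i : Fin n) (v : ℕ) :
    ∏ j, F j (Function.update g i v j) = F i v * ∏ j ∈ Finset.univ.erase i, F j (g j) := by
  rw [← Finset.mul_prod_erase Finset.univ _ (Finset.mem_univ i), Function.update_self]
  congr 1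
  exact Finset.prod_congr rfl fun j hj => by
    rw [Function.update_of_ne (Finset.mem_erase.mp hj).1]

lemma StAux.prod_split (F : Fin n → ℕ → ℝ) (g : Fin n → ℕ) (i : Fin n) :
    ∏ j, F j (g j) = F i (g i) * ∏ j ∈ Finset.univ.erase i, F j (g j) :=
  (Finset.mul_prod_erase _ _ (Finset.mem_univ i)).symm

def StAux.incc (i : Fin n) (y : St n) : St n := ⟨y.d, Function.update y.c i (y.c i + 1), y.u⟩
def StAux.decc (i : Fin n) (x : St n) : St n := ⟨x.d, Function.update x.c i (x.c i - 1), x.u⟩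
def StAux.incd (i : Fin n) (y : St n) : St n := ⟨Function.update y.d i (y.d i + 1), y.c, y.u⟩
def StAux.decd (i : Fin n) (x : St n) : St n := ⟨Function.update x.d i (x.d i - 1), x.c, x.u⟩
def StAux.incu (i : Fin n) (y : St n) : St n := ⟨y.d, y.c, Function.update y.u i (y.u i + 1)⟩
def StAux.decu (i : Fin n) (x : St n) : St n := ⟨x.d, x.c, Function.update x.u i (x.u i - 1)⟩

namespace StAux

lemma upd_cancel (g : Fin n → ℕ) (i : Fin n) (h : 1 ≤ g i) :
    Function.update (Function.update g i (g i - 1)) i (Function.update g i (g i - 1) i + 1) = g := by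
  funext j
  rcases eq_or_ne j i with rfl | hj
  · simp only [Function.update_self]; omega
  · simp only [Function.update_of_ne hj]

lemma upd_cancel' (g : Fin n → ℕ) (i : Fin n) :
    Function.update (Function.update g i (g i + 1)) i (Function.update g i (g i + 1) i - 1) = g := by
  funext j
  rcases eq_or_ne j i with rfl | hj
  · simp only [Function.update_self]; omega
  · simp only [Function.update_of_ne hj]

lemma incc_decc (i : Fin n) (x : St n) (h : 1 ≤ x.c i) : incc i (decc i x) = x := by
  simp only [incc, decc, upd_cancel _ _ h]

lemma decc_incc (i : Fin n) (y : St n) : decc i (incc i y) = y := by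
  simp only [incc, decc, upd_cancel']

lemma incd_decd (i : Fin n) (x : St n) (h : 1 ≤ x.d i) : incd i (decd i x) = x := by
  simp only [incd, decd, upd_cancel _ _ h]

lemma decd_incd (i : Fin n) (y : St n) : decd i (incd i y) = y := by
  simp only [incd, decd, upd_cancel']

lemma incu_decu (i : Fin n) (x : St n) (h : 1 ≤ x.u i) : incu i (decu i x) = x := by
  simp only [incu, decu, upd_cancel _ _ h]

lemma decu_incu (i : Fin n) (y : St n) : decu i (incu i y) = y := by
  simp only [incu, decu, upd_cancel']

lemma total_incc (i : Fin n) (y : St n) : (incc i y).total = y.total + 1 := by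
  have h : ∀ j, y.d j + Function.update y.c i (y.c i + 1) j + y.u j
      = (y.d j + y.c j + y.u j) + (if j = i then 1 else 0) := by
    intro j
    rcases eq_or_ne j i with rfl | hj
    · simp; omega
    · simp [Function.update_of_ne hj, hj]
  simp [St.total, incc, h, Finset.sum_add_distrib, Finset.sum_ite_eq']

lemma total_incd (i : Fin n) (y : St n) : (incd i y).total = y.total + 1 := by
  have h : ∀ j, Function.update y.d i (y.d i + 1) j + y.c j + y.u j
      = (y.d j + y.c j + y.u j) + (if j = i then 1 else 0) := by
    intro j
    rcases eq_or_ne j i with rfl | hj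
    · simp; omega
    · simp [Function.update_of_ne hj, hj]
  simp [St.total, incd, h, Finset.sum_add_distrib, Finset.sum_ite_eq']

lemma total_incu (i : Fin n) (y : St n) : (incu i y).total = y.total + 1 := by
  have h : ∀ j, y.d j + y.c j + Function.update y.u i (y.u i + 1) j
      = (y.d j + y.c j + y.u j) + (if j = i then 1 else 0) := by
    intro j
    rcases eq_or_ne j i with rfl | hj
    · simp; omega
    · simp [Function.update_of_ne hj, hj]
  simp [St.total, incu, h, Finset.sum_add_distrib, Finset.sum_ite_eq']

variable (p μc μd μu : Fin n → ℝ)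

lemma w_incc (i : Fin n) (y : St n) :
    w p μc μd μu (incc i y) = (p i / μc i) * w p μc μd μu y := by
  have h1 : w p μc μd μu (incc i y)
      = ∏ j, (fun j c => (p j / μc j) ^ c *
          ((p j / μd j) ^ y.d j / (Nat.factorial (y.d j) : ℝ)) *
          ((p j / μu j) ^ y.u j / (Nat.factorial (y.u j) : ℝ))) j
          (Function.update y.c i (y.c i + 1) j) := rfl
  have h2 : w p μc μd μu y
      = ∏ j, (fun j c => (p j / μc j) ^ c *
          ((p j / μd j) ^ y.d j / (Nat.factorial (y.d j) : ℝ)) *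
          ((p j / μu j) ^ y.u j / (Nat.factorial (y.u j) : ℝ))) j (y.c j) := rfl
  rw [h1, h2, prod_update_univ (fun j c => (p j / μc j) ^ c *
      ((p j / μd j) ^ y.d j / (Nat.factorial (y.d j) : ℝ)) *
      ((p j / μu j) ^ y.u j / (Nat.factorial (y.u j) : ℝ))) y.c i (y.c i + 1),
    prod_split (fun j c => (p j / μc j) ^ c *
      ((p j / μd j) ^ y.d j / (Nat.factorial (y.d j) : ℝ)) *
      ((p j / μu j) ^ y.u j / (Nat.factorial (y.u j) : ℝ))) y.c i]
  rw [pow_succ]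
  ring

lemma w_incd (i : Fin n) (y : St n) :
    ((y.d i : ℝ) + 1) * w p μc μd μu (incd i y) = (p i / μd i) * w p μc μd μu y := by
  have h1 : w p μc μd μu (incd i y)
      = ∏ j, (fun j d => (p j / μc j) ^ y.c j *
          ((p j / μd j) ^ d / (Nat.factorial d : ℝ)) *
          ((p j / μu j) ^ y.u j / (Nat.factorial (y.u j) : ℝ))) j
          (Function.update y.d i (y.d i + 1) j) := rfl
  have h2 : w p μc μd μu y
      = ∏ j, (fun j d => (p j / μc j) ^ y.c j *
          ((p j / μd j) ^ d / (Nat.factorial d : ℝ)) *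
          ((p j / μu j) ^ y.u j / (Nat.factorial (y.u j) : ℝ))) j (y.d j) := rfl
  rw [h1, h2, prod_update_univ (fun j d => (p j / μc j) ^ y.c j *
      ((p j / μd j) ^ d / (Nat.factorial d : ℝ)) *
      ((p j / μu j) ^ y.u j / (Nat.factorial (y.u j) : ℝ))) y.d i (y.d i + 1),
    prod_split (fun j d => (p j / μc j) ^ y.c j *
      ((p j / μd j) ^ d / (Nat.factorial d : ℝ)) *
      ((p j / μu j) ^ y.u j / (Nat.factorial (y.u j) : ℝ))) y.d i]
  have hfac : ((Nat.factorial (y.d i + 1) : ℕ) : ℝ)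
      = ((y.d i : ℝ) + 1) * (Nat.factorial (y.d i) : ℝ) := by
    rw [Nat.factorial_succ]; push_cast; ring
  have hne : (Nat.factorial (y.d i) : ℝ) ≠ 0 := Nat.cast_ne_zero.mpr (Nat.factorial_ne_zero _)
  have hne1 : (y.d i : ℝ) + 1 ≠ 0 := by positivity
  have key : ((y.d i : ℝ) + 1) * ((p i / μd i) ^ (y.d i + 1) / (Nat.factorial (y.d i + 1) : ℝ))
      = (p i / μd i) * ((p i / μd i) ^ y.d i / (Nat.factorial (y.d i) : ℝ)) := by
    rw [hfac, pow_succ, ← mul_div_assoc, mul_div_mul_left _ _ hne1,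
      mul_comm ((p i / μd i) ^ y.d i), mul_div_assoc]
  linear_combination ((p i / μc i) ^ y.c i *
    ((p i / μu i) ^ y.u i / (Nat.factorial (y.u i) : ℝ)) *
    ∏ j ∈ Finset.univ.erase i, ((p j / μc j) ^ y.c j *
      ((p j / μd j) ^ y.d j / (Nat.factorial (y.d j) : ℝ)) *
      ((p j / μu j) ^ y.u j / (Nat.factorial (y.u j) : ℝ)))) * key

lemma w_incu (i : Fin n) (y : St n) :
    ((y.u i : ℝ) + 1) * w p μc μd μu (incu i y) = (p i / μu i) * w p μc μd μu y := by
  have h1 : w p μc μd μu (incu i y)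
      = ∏ j, (fun j u => (p j / μc j) ^ y.c j *
          ((p j / μd j) ^ y.d j / (Nat.factorial (y.d j) : ℝ)) *
          ((p j / μu j) ^ u / (Nat.factorial u : ℝ))) j
          (Function.update y.u i (y.u i + 1) j) := rfl
  have h2 : w p μc μd μu y
      = ∏ j, (fun j u => (p j / μc j) ^ y.c j *
          ((p j / μd j) ^ y.d j / (Nat.factorial (y.d j) : ℝ)) *
          ((p j / μu j) ^ u / (Nat.factorial u : ℝ))) j (y.u j) := rfl
  rw [h1, h2, prod_update_univ (fun j u => (p j / μc j) ^ y.c j *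
      ((p j / μd j) ^ y.d j / (Nat.factorial (y.d j) : ℝ)) *
      ((p j / μu j) ^ u / (Nat.factorial u : ℝ))) y.u i (y.u i + 1),
    prod_split (fun j u => (p j / μc j) ^ y.c j *
      ((p j / μd j) ^ y.d j / (Nat.factorial (y.d j) : ℝ)) *
      ((p j / μu j) ^ u / (Nat.factorial u : ℝ))) y.u i]
  have hfac : ((Nat.factorial (y.u i + 1) : ℕ) : ℝ)
      = ((y.u i : ℝ) + 1) * (Nat.factorial (y.u i) : ℝ) := by
    rw [Nat.factorial_succ]; push_cast; ring
  have hne : (Nat.factorial (y.u i) : ℝ) ≠ 0 := Nat.cast_ne_zero.mpr (Nat.factorial_ne_zero _)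
  have hne1 : (y.u i : ℝ) + 1 ≠ 0 := by positivity
  have key : ((y.u i : ℝ) + 1) * ((p i / μu i) ^ (y.u i + 1) / (Nat.factorial (y.u i + 1) : ℝ))
      = (p i / μu i) * ((p i / μu i) ^ y.u i / (Nat.factorial (y.u i) : ℝ)) := by
    rw [hfac, pow_succ, ← mul_div_assoc, mul_div_mul_left _ _ hne1,
      mul_comm ((p i / μu i) ^ y.u i), mul_div_assoc]
  linear_combination ((p i / μc i) ^ y.c i *
    ((p i / μd i) ^ y.d i / (Nat.factorial (y.d i) : ℝ)) *
    ∏ j ∈ Finset.univ.erase i, ((p j / μc j) ^ y.c j *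
      ((p j / μd j) ^ y.d j / (Nat.factorial (y.d j) : ℝ)) *
      ((p j / μu j) ^ y.u j / (Nat.factorial (y.u j) : ℝ)))) * key


noncomputable def Zs (k : ℕ) : ℝ := ∑ x ∈ fs n k, w p μc μd μu x

lemma sum_c (m : ℕ) (hm : 1 ≤ m) (i : Fin n) :
    ∑ x ∈ (fs n m).filter (fun x => 1 ≤ x.c i), w p μc μd μu x
      = (p i / μc i) * Zs p μc μd μu (m - 1) := by
  classical
  rw [Zs, Finset.mul_sum]
  refine Finset.sum_nbij' (decc i) (incc i) ?_ ?_ ?_ ?_ ?_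
  · intro x hx
    obtain ⟨hx1, hx2⟩ := Finset.mem_filter.mp hx
    replace hx1 := mem_fs.mp hx1
    have ht : (incc i (decc i x)).total = (decc i x).total + 1 := total_incc i (decc i x)
    rw [incc_decc i x hx2] at ht
    exact mem_fs.mpr (by omega)
  · intro y hy
    refine Finset.mem_filter.mpr ⟨mem_fs.mpr ?_, ?_⟩
    · rw [total_incc, mem_fs.mp hy]; omega
    · simp [incc]
  · intro x hx
    exact incc_decc i x (Finset.mem_filter.mp hx).2
  · intro y _
    exact decc_incc i y
  · intro x hx
    have h2 := (Finset.mem_filter.mp hx).2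
    have := w_incc p μc μd μu i (decc i x)
    rw [incc_decc i x h2] at this
    exact this

lemma sum_d (m : ℕ) (hm : 1 ≤ m) (i : Fin n) :
    ∑ x ∈ fs n m, (x.d i : ℝ) * w p μc μd μu x
      = (p i / μd i) * Zs p μc μd μu (m - 1) := by
  classical
  rw [Zs, Finset.mul_sum,
    ← Finset.sum_filter_add_sum_filter_not (fs n m) (fun x => 1 ≤ x.d i)]
  have h0 : ∑ x ∈ (fs n m).filter (fun x => ¬ 1 ≤ x.d i), (x.d i : ℝ) * w p μc μd μu x = 0 := by
    refine Finset.sum_eq_zero fun x hx => ?_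
    have h := (Finset.mem_filter.mp hx).2
    have : x.d i = 0 := by omega
    simp [this]
  rw [h0, add_zero]
  refine Finset.sum_nbij' (decd i) (incd i) ?_ ?_ ?_ ?_ ?_
  · intro x hx
    obtain ⟨hx1, hx2⟩ := Finset.mem_filter.mp hx
    replace hx1 := mem_fs.mp hx1
    have ht : (incd i (decd i x)).total = (decd i x).total + 1 := total_incd i (decd i x)
    rw [incd_decd i x hx2] at ht
    exact mem_fs.mpr (by omega)
  · intro y hy
    refine Finset.mem_filter.mpr ⟨mem_fs.mpr ?_, ?_⟩
    · rw [total_incd, mem_fs.mp hy]; omega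
    · simp [incd]
  · intro x hx
    exact incd_decd i x (Finset.mem_filter.mp hx).2
  · intro y _
    exact decd_incd i y
  · intro x hx
    have h2 := (Finset.mem_filter.mp hx).2
    have key := w_incd p μc μd μu i (decd i x)
    rw [incd_decd i x h2] at key
    have hdi : ((decd i x).d i : ℝ) + 1 = (x.d i : ℝ) := by
      have : (decd i x).d i = x.d i - 1 := by simp [decd]
      rw [this]
      have : x.d i - 1 + 1 = x.d i := by omega
      exact_mod_cast congrArg (Nat.cast : ℕ → ℝ) this
    rw [hdi] at key
    exact key.symm ▸ key

lemma sum_u (m : ℕ) (hm : 1 ≤ m) (i : Fin n) :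
    ∑ x ∈ fs n m, (x.u i : ℝ) * w p μc μd μu x
      = (p i / μu i) * Zs p μc μd μu (m - 1) := by
  classical
  rw [Zs, Finset.mul_sum,
    ← Finset.sum_filter_add_sum_filter_not (fs n m) (fun x => 1 ≤ x.u i)]
  have h0 : ∑ x ∈ (fs n m).filter (fun x => ¬ 1 ≤ x.u i), (x.u i : ℝ) * w p μc μd μu x = 0 := by
    refine Finset.sum_eq_zero fun x hx => ?_
    have h := (Finset.mem_filter.mp hx).2
    have : x.u i = 0 := by omega
    simp [this]
  rw [h0, add_zero]
  refine Finset.sum_nbij' (decu i) (incu i) ?_ ?_ ?_ ?_ ?_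
  · intro x hx
    obtain ⟨hx1, hx2⟩ := Finset.mem_filter.mp hx
    replace hx1 := mem_fs.mp hx1
    have ht : (incu i (decu i x)).total = (decu i x).total + 1 := total_incu i (decu i x)
    rw [incu_decu i x hx2] at ht
    exact mem_fs.mpr (by omega)
  · intro y hy
    refine Finset.mem_filter.mpr ⟨mem_fs.mpr ?_, ?_⟩
    · rw [total_incu, mem_fs.mp hy]; omega
    · simp [incu]
  · intro x hx
    exact incu_decu i x (Finset.mem_filter.mp hx).2
  · intro y _
    exact decu_incu i y
  · intro x hx
    have h2 := (Finset.mem_filter.mp hx).2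
    have key := w_incu p μc μd μu i (decu i x)
    rw [incu_decu i x h2] at key
    have hdi : ((decu i x).u i : ℝ) + 1 = (x.u i : ℝ) := by
      have : (decu i x).u i = x.u i - 1 := by simp [decu]
      rw [this]
      have : x.u i - 1 + 1 = x.u i := by omega
      exact_mod_cast congrArg (Nat.cast : ℕ → ℝ) this
    rw [hdi] at key
    exact key.symm ▸ key

end StAux
end Aux

namespace StAux
variable {n : ℕ} (p μc μd μu : Fin n → ℝ)

lemma w_pos (hp : ∀ i, 0 < p i) (hμc : ∀ i, 0 < μc i) (hμd : ∀ i, 0 < μd i)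
    (hμu : ∀ i, 0 < μu i) (x : St n) : 0 < w p μc μd μu x := by
  unfold St.w
  refine Finset.prod_pos fun i _ => ?_
  have h1 : (0:ℝ) < (p i / μc i) ^ x.c i := pow_pos (div_pos (hp i) (hμc i)) _
  have h2 : (0:ℝ) < (p i / μd i) ^ x.d i / (Nat.factorial (x.d i) : ℝ) :=
    div_pos (pow_pos (div_pos (hp i) (hμd i)) _) (by exact_mod_cast (x.d i).factorial_pos)
  have h3 : (0:ℝ) < (p i / μu i) ^ x.u i / (Nat.factorial (x.u i) : ℝ) :=
    div_pos (pow_pos (div_pos (hp i) (hμu i)) _) (by exact_mod_cast (x.u i).factorial_pos)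
  exact mul_pos (mul_pos h1 h2) h3

lemma fs_nonempty (hn : 1 ≤ n) (k : ℕ) : (fs n k).Nonempty := by
  refine ⟨⟨fun j => if j = ⟨0, hn⟩ then k else 0, fun _ => 0, fun _ => 0⟩, mem_fs.mpr ?_⟩
  simp [St.total, Finset.sum_ite_eq']

lemma Z_eq (k : ℕ) : Z p μc μd μu (k : ℤ) = Zs p μc μd μu k := by
  have h0 : ∀ x ∉ fs n k, (if ((x.total : ℤ) = (k:ℤ)) then w p μc μd μu x else 0) = 0 := by
    intro x hx
    rw [if_neg]
    intro h
    exact hx (mem_fs.mpr (by exact_mod_cast h))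
  rw [St.Z, tsum_eq_sum h0, Zs]
  exact Finset.sum_congr rfl fun x hx => if_pos (by exact_mod_cast mem_fs.mp hx)

end StAux

open StAux

/-- The stationary expected power equals the throughput times the average energy per
round: `Σ_i (P^c_i Pr(x^c_i > 0) + P^d_i E[x^d_i] + P^u_i E[x^u_i])
 = (Z(m-1)/Z(m)) Σ_i p_i ℰ_i` where `ℰ_i = P^c_i/μ^c_i + P^u_i/μ^u_i + P^d_i/μ^d_i`. -/
theorem stmt11 (n m : ℕ) (hn : 1 ≤ n) (hm : 1 ≤ m)
    (p μc μd μu : Fin n → ℝ)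
    (hp : ∀ i, 0 < p i) (hpsum : ∑ i, p i = 1)
    (hμc : ∀ i, 0 < μc i) (hμd : ∀ i, 0 < μd i) (hμu : ∀ i, 0 < μu i)
    (Pc Pd Pu : Fin n → ℝ)
    (hPc : ∀ i, 0 ≤ Pc i) (hPd : ∀ i, 0 ≤ Pd i) (hPu : ∀ i, 0 ≤ Pu i) :
    (∑ i,
        (Pc i * (∑' x : St n, if x.total = m ∧ 1 ≤ x.c i then pd p μc μd μu (m : ℤ) x else 0) +
          Pd i * Epi p μc μd μu (m : ℤ) (fun x => (x.d i : ℝ)) +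
          Pu i * Epi p μc μd μu (m : ℤ) (fun x => (x.u i : ℝ)))) =
      (Z p μc μd μu ((m : ℤ) - 1) / Z p μc μd μu (m : ℤ)) *
        ∑ i, p i * (Pc i / μc i + Pu i / μu i + Pd i / μd i) := by
  classical
  have hZm : Z p μc μd μu (m : ℤ) = Zs p μc μd μu m := Z_eq p μc μd μu m
  have hZm1 : Z p μc μd μu ((m:ℤ) - 1) = Zs p μc μd μu (m - 1) := by
    have h : ((m:ℤ) - 1) = ((m - 1 : ℕ) : ℤ) := by omega
    rw [h]
    exact Z_eq p μc μd μu (m - 1)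
  have hPr : ∀ i : Fin n,
      (∑' x : St n, if x.total = m ∧ 1 ≤ x.c i then pd p μc μd μu (m : ℤ) x else 0)
        = (p i / μc i) * Zs p μc μd μu (m - 1) / Zs p μc μd μu m := by
    intro i
    have h0 : ∀ x ∉ (fs n m).filter (fun x => 1 ≤ x.c i),
        (if x.total = m ∧ 1 ≤ x.c i then pd p μc μd μu (m : ℤ) x else 0) = 0 := by
      intro x hx
      rw [if_neg]
      rintro ⟨h1, h2⟩
      exact hx (Finset.mem_filter.mpr ⟨mem_fs.mpr h1, h2⟩)
    rw [tsum_eq_sum h0]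
    have h1 : ∀ x ∈ (fs n m).filter (fun x => 1 ≤ x.c i),
        (if x.total = m ∧ 1 ≤ x.c i then pd p μc μd μu (m : ℤ) x else 0)
          = w p μc μd μu x / Zs p μc μd μu m := by
      intro x hx
      obtain ⟨hx1, hx2⟩ := Finset.mem_filter.mp hx
      rw [if_pos ⟨mem_fs.mp hx1, hx2⟩, St.pd, hZm]
    rw [Finset.sum_congr rfl h1, ← Finset.sum_div, sum_c p μc μd μu m hm i]
  have hEd : ∀ i : Fin n, Epi p μc μd μu (m : ℤ) (fun x => (x.d i : ℝ))
      = (p i / μd i) * Zs p μc μd μu (m - 1) / Zs p μc μd μu m := by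
    intro i
    have h0 : ∀ x ∉ fs n m,
        (if ((x.total : ℤ) = (m:ℤ)) then (x.d i : ℝ) * pd p μc μd μu (m:ℤ) x else 0) = 0 := by
      intro x hx
      rw [if_neg]
      intro h
      exact hx (mem_fs.mpr (by exact_mod_cast h))
    rw [St.Epi, tsum_eq_sum h0]
    have h1 : ∀ x ∈ fs n m,
        (if ((x.total : ℤ) = (m:ℤ)) then (x.d i : ℝ) * pd p μc μd μu (m:ℤ) x else 0)
          = (x.d i : ℝ) * w p μc μd μu x / Zs p μc μd μu m := by
      intro x hx
      rw [if_pos (by exact_mod_cast mem_fs.mp hx), St.pd, hZm, mul_div_assoc']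
    rw [Finset.sum_congr rfl h1, ← Finset.sum_div, sum_d p μc μd μu m hm i]
  have hEu : ∀ i : Fin n, Epi p μc μd μu (m : ℤ) (fun x => (x.u i : ℝ))
      = (p i / μu i) * Zs p μc μd μu (m - 1) / Zs p μc μd μu m := by
    intro i
    have h0 : ∀ x ∉ fs n m,
        (if ((x.total : ℤ) = (m:ℤ)) then (x.u i : ℝ) * pd p μc μd μu (m:ℤ) x else 0) = 0 := by
      intro x hx
      rw [if_neg]
      intro h
      exact hx (mem_fs.mpr (by exact_mod_cast h))
    rw [St.Epi, tsum_eq_sum h0]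
    have h1 : ∀ x ∈ fs n m,
        (if ((x.total : ℤ) = (m:ℤ)) then (x.u i : ℝ) * pd p μc μd μu (m:ℤ) x else 0)
          = (x.u i : ℝ) * w p μc μd μu x / Zs p μc μd μu m := by
      intro x hx
      rw [if_pos (by exact_mod_cast mem_fs.mp hx), St.pd, hZm, mul_div_assoc']
    rw [Finset.sum_congr rfl h1, ← Finset.sum_div, sum_u p μc μd μu m hm i]
  rw [hZm, hZm1, Finset.mul_sum]
  refine Finset.sum_congr rfl fun i _ => ?_
  rw [hPr i, hEd i, hEu i]
  ring
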